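/- arXiv:0909.1694 — 4 statements merged into one kernel-verified Lean document; each statement's English description precedes it below -/
import Mathlib

section
/- For every integer n ≥ 2, the Bernoulli–Carlitz fraction satisfies β_n = Σ_{k≥1} q^k [k]^{n−1} − (n+1) Σ_{k≥1} q^{2k} [k]^{n−1}, as an identity of formal power series in q (both sides being q-adically convergent and equal to the rational function β_n). -/
/-- The quantum integer `[k] = 1 + q + ⋯ + q^{k-1}` as a polynomial over `ℚ`. -/
noncomputable def qIntP (k : ℕ) : Polynomial ℚ := ∑ i ∈ Finset.range k, Polynomial.X ^ i

/-- The power series `Σ_{k≥1} q^k [k]^{n-1} − (n+1) Σ_{k≥1} q^{2k} [k]^{n-1}`; the `k`-th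
summand has order at least `k`, so the `d`-th coefficient only involves `k ≤ d`. -/
noncomputable def carlitzSeries (n : ℕ) : PowerSeries ℚ :=
  PowerSeries.mk fun d =>
    ∑ k ∈ Finset.Icc 1 d, Polynomial.coeff
      (Polynomial.X ^ k * qIntP k ^ (n - 1)
        - ((n : Polynomial ℚ) + 1) * Polynomial.X ^ (2 * k) * qIntP k ^ (n - 1)) d

/-!
Put `T_{n,k} = q^k ((1 - q) [k]^n - n q^k [k]^{n-1})`. Since `[k + 1] = 1 + q [k]`, the
binomial theorem (and its derivative) give `q ∑_{i ≤ m} C(m,i) q^i T_{i,k} = T_{m,k+1}`. Hence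
the `q`-adically convergent sums `b_n = ∑_{k ≥ 0} T_{n,k}` satisfy the recurrence defining `β`:
summing over `k` shifts the index, and the missing term `T_{m,0} = -δ_{m,1}` supplies the
right-hand side.
The recurrence determines `β` in any domain where `q^{m+1} ≠ 1`, since `β_m` enters the `m`-th
equation with coefficient `q^{m+1} - 1`; so `β_n = b_n` in `ℚ((q))`. For `n ≥ 2`, finally,
`(1 - q)[k] = 1 - q^k` turns `T_{n,k}` into `q^k [k]^{n-1} - (n + 1) q^{2k} [k]^{n-1}`, and
`T_{n,0} = 0`.
-/

open Finset
open scoped PowerSeries.WithPiTopology RatFunc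

section Algebra

variable {R : Type*} [CommRing R]

theorem sum_range_choose_mul_mul_pow_mul_pow_sub_one (x y : R) (m : ℕ) :
    ∑ i ∈ range (m + 1), (m.choose i : R) * (i * (x ^ i * y ^ (i - 1)))
      = m * x * (1 + x * y) ^ (m - 1) := by
  rcases m with _ | m
  · simp
  rw [sum_range_succ', add_comm 1, add_pow]
  simp only [Nat.cast_zero, zero_mul, mul_zero, add_zero, Nat.add_sub_cancel, mul_sum]
  refine sum_congr rfl fun i _ => ?_
  have hchoose := congrArg (Nat.cast : ℕ → R) (Nat.add_one_mul_choose_eq m i)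
  push_cast at hchoose ⊢
  rw [one_pow, mul_one, mul_pow]
  linear_combination -x ^ (i + 1) * y ^ i * hchoose

def qInt (q : R) (k : ℕ) : R := ∑ i ∈ range k, q ^ i

theorem qInt_zero (q : R) : qInt q 0 = 0 := sum_range_zero _

theorem qInt_succ (q : R) (k : ℕ) : qInt q (k + 1) = 1 + q * qInt q k := by
  rw [qInt, qInt, geom_sum_succ, add_comm]

theorem one_sub_mul_qInt (q : R) (k : ℕ) : (1 - q) * qInt q k = 1 - q ^ k :=
  mul_neg_geom_sum q k

def bernoulliCarlitzTerm (q : R) (n k : ℕ) : R :=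
  q ^ k * ((1 - q) * qInt q k ^ n - n * q ^ k * qInt q k ^ (n - 1))

theorem pow_dvd_bernoulliCarlitzTerm (q : R) (n k : ℕ) : q ^ k ∣ bernoulliCarlitzTerm q n k :=
  dvd_mul_right _ _

theorem bernoulliCarlitzTerm_zero_left (q : R) (k : ℕ) :
    bernoulliCarlitzTerm q 0 k = q ^ k - q ^ (k + 1) := by
  simp only [bernoulliCarlitzTerm, pow_zero, Nat.cast_zero]
  ring

theorem bernoulliCarlitzTerm_zero_right (q : R) {m : ℕ} (hm : 1 ≤ m) :
    bernoulliCarlitzTerm q m 0 = -if m = 1 then 1 else 0 := by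
  obtain ⟨m, rfl⟩ := Nat.exists_eq_add_of_le' hm
  rcases m with _ | m <;> simp [bernoulliCarlitzTerm, qInt_zero]

theorem mul_sum_choose_mul_pow_mul_bernoulliCarlitzTerm (q : R) (m k : ℕ) :
    q * ∑ i ∈ range (m + 1), (m.choose i : R) * q ^ i * bernoulliCarlitzTerm q i k
      = bernoulliCarlitzTerm q m (k + 1) := by
  have hbinom : ∑ i ∈ range (m + 1), (m.choose i : R) * (q * qInt q k) ^ i
      = qInt q (k + 1) ^ m := by
    rw [qInt_succ, add_comm 1, add_pow]
    exact sum_congr rfl fun i _ => by ring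
  have hderiv := sum_range_choose_mul_mul_pow_mul_pow_sub_one q (qInt q k) m
  rw [← qInt_succ] at hderiv
  calc q * ∑ i ∈ range (m + 1), (m.choose i : R) * q ^ i * bernoulliCarlitzTerm q i k
      = q * (q ^ k * ((1 - q) * ∑ i ∈ range (m + 1), (m.choose i : R) * (q * qInt q k) ^ i
          - q ^ k * ∑ i ∈ range (m + 1),
              (m.choose i : R) * (i * (q ^ i * qInt q k ^ (i - 1))))) := by
        simp only [mul_sum, ← sum_sub_distrib, bernoulliCarlitzTerm]
        exact sum_congr rfl fun i _ => by ring
    _ = bernoulliCarlitzTerm q m (k + 1) := by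
        rw [hbinom, hderiv, bernoulliCarlitzTerm]
        ring

theorem bernoulliCarlitzTerm_of_two_le (q : R) {n : ℕ} (hn : 2 ≤ n) (k : ℕ) :
    bernoulliCarlitzTerm q n k
      = q ^ k * qInt q k ^ (n - 1) - (n + 1) * q ^ (2 * k) * qInt q k ^ (n - 1) := by
  obtain ⟨n, rfl⟩ := Nat.exists_eq_add_of_le' (by omega : 1 ≤ n)
  rw [bernoulliCarlitzTerm, Nat.add_sub_cancel, pow_succ']
  push_cast
  linear_combination q ^ k * qInt q k ^ n * one_sub_mul_qInt q k

end Algebra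

structure IsBernoulliCarlitz {K : Type*} [CommRing K] (q : K) (b : ℕ → K) : Prop where
  zero : b 0 = 1
  recurrence : ∀ m : ℕ, 1 ≤ m →
    q * (∑ i ∈ range (m + 1), (m.choose i : K) * q ^ i * b i) - b m = if m = 1 then 1 else 0

namespace IsBernoulliCarlitz

variable {K : Type*} [CommRing K] {q : K} {b : ℕ → K}

theorem map {L : Type*} [CommRing L] (hb : IsBernoulliCarlitz q b) (f : K →+* L) :
    IsBernoulliCarlitz (f q) (f ∘ b) where
  zero := by simp [hb.zero]
  recurrence m hm := by
    simpa [map_sum, apply_ite f] using congrArg f (hb.recurrence m hm)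

theorem unique [IsDomain K] (hq : ∀ m : ℕ, 1 ≤ m → q ^ (m + 1) ≠ 1) {b' : ℕ → K}
    (hb : IsBernoulliCarlitz q b) (hb' : IsBernoulliCarlitz q b') : b = b' := by
  funext m
  induction m using Nat.strong_induction_on with
  | _ m ih =>
    rcases Nat.eq_zero_or_pos m with rfl | hm
    · rw [hb.zero, hb'.zero]
    have hsum : ∑ i ∈ range m, (m.choose i : K) * q ^ i * b i
        = ∑ i ∈ range m, (m.choose i : K) * q ^ i * b' i :=
      sum_congr rfl fun i hi => by rw [ih i (mem_range.mp hi)]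
    have hrec := hb.recurrence m hm
    have hrec' := hb'.recurrence m hm
    rw [sum_range_succ, Nat.choose_self, hsum] at hrec
    rw [sum_range_succ, Nat.choose_self] at hrec'
    refine mul_right_cancel₀ (sub_ne_zero.mpr (hq m hm)) ?_
    linear_combination hrec - hrec'

theorem of_hasSum {S : Type*} [CommRing S] [TopologicalSpace S] [IsTopologicalRing S] [T2Space S]
    {q : S} (hq : IsTopologicallyNilpotent q) {b : ℕ → S}
    (hb : ∀ n, HasSum (bernoulliCarlitzTerm q n ·) (b n)) : IsBernoulliCarlitz q b where
  zero := by
    have hpartial :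
        (fun N => ∑ k ∈ range N, bernoulliCarlitzTerm q 0 k) = fun N => 1 - q ^ N := by
      funext N
      simp only [bernoulliCarlitzTerm_zero_left, sum_range_sub', pow_zero]
    have hlim := (hb 0).tendsto_sum_nat
    rw [hpartial] at hlim
    simpa using tendsto_nhds_unique hlim (by simpa using hq.const_sub 1)
  recurrence m hm := by
    have hshift := (hasSum_nat_add_iff' 1).mpr (hb m)
    have hsum := (hasSum_sum (s := range (m + 1))
      fun i _ => (hb i).mul_left ((m.choose i : S) * q ^ i)).mul_left q
    simp only [mul_sum_choose_mul_pow_mul_bernoulliCarlitzTerm] at hsum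
    rw [hsum.unique hshift, sum_range_one, bernoulliCarlitzTerm_zero_right q hm]
    ring

end IsBernoulliCarlitz

namespace PowerSeries.WithPiTopology

theorem summable_of_X_pow_dvd {R : Type*} [Semiring R] [TopologicalSpace R] {f : ℕ → R⟦X⟧}
    (hf : ∀ k, X ^ k ∣ f k) : Summable f :=
  (summable_iff_summable_coeff R).mpr fun d => summable_of_ne_finset_zero (s := range (d + 1))
    fun k hk => X_pow_dvd_iff.mp (hf k) d (by simpa using hk)

end PowerSeries.WithPiTopology

noncomputable def bernoulliCarlitzSeries (n : ℕ) : PowerSeries ℚ :=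
  ∑' k, bernoulliCarlitzTerm PowerSeries.X n k

theorem hasSum_bernoulliCarlitzSeries (n : ℕ) :
    HasSum (bernoulliCarlitzTerm PowerSeries.X n) (bernoulliCarlitzSeries n) :=
  (PowerSeries.WithPiTopology.summable_of_X_pow_dvd
    (pow_dvd_bernoulliCarlitzTerm PowerSeries.X n)).hasSum

theorem isBernoulliCarlitz_bernoulliCarlitzSeries :
    IsBernoulliCarlitz PowerSeries.X bernoulliCarlitzSeries := by
  have hX : IsTopologicallyNilpotent (PowerSeries.X : PowerSeries ℚ) :=
    PowerSeries.WithPiTopology.isTopologicallyNilpotent_of_constantCoeff_zero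
      PowerSeries.constantCoeff_X
  exact IsBernoulliCarlitz.of_hasSum hX hasSum_bernoulliCarlitzSeries

theorem coe_qIntP (k : ℕ) :
    ((qIntP k : Polynomial ℚ) : PowerSeries ℚ) = qInt PowerSeries.X k := by
  rw [qIntP, qInt, ← Polynomial.coeToPowerSeries.ringHom_apply, map_sum]
  simp

theorem bernoulliCarlitzSeries_eq_carlitzSeries {n : ℕ} (hn : 2 ≤ n) :
    bernoulliCarlitzSeries n = carlitzSeries n := by
  refine (hasSum_bernoulliCarlitzSeries n).unique
    ((PowerSeries.WithPiTopology.hasSum_iff_hasSum_coeff ℚ).mpr fun d => ?_)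
  have hcoeff : ∀ k, PowerSeries.coeff d (bernoulliCarlitzTerm PowerSeries.X n k)
      = Polynomial.coeff (Polynomial.X ^ k * qIntP k ^ (n - 1)
        - ((n : Polynomial ℚ) + 1) * Polynomial.X ^ (2 * k) * qIntP k ^ (n - 1)) d := by
    intro k
    rw [← Polynomial.coeff_coe, bernoulliCarlitzTerm_of_two_le _ hn, ← coe_qIntP]
    push_cast
    rw [← Polynomial.coeToPowerSeries.ringHom_apply (φ := (n : Polynomial ℚ)), map_natCast]
  simp only [hcoeff, carlitzSeries, PowerSeries.coeff_mk]
  refine hasSum_sum_of_ne_finset_zero fun k hk => ?_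
  rw [← hcoeff]
  rcases Nat.eq_zero_or_pos k with rfl | hk0
  · rw [bernoulliCarlitzTerm_of_two_le _ hn, qInt_zero, zero_pow (by omega)]
    simp
  · exact PowerSeries.X_pow_dvd_iff.mp (pow_dvd_bernoulliCarlitzTerm _ n k) d
      (by simp at hk; omega)

/-- for `n ≥ 2`, the Bernoulli–Carlitz fraction `β_n`, expanded as a (Laurent)
series at `q = 0`, equals `Σ_{k≥1} q^k [k]^{n-1} − (n+1) Σ_{k≥1} q^{2k} [k]^{n-1}`. -/
theorem bernoulliCarlitz_series (β : ℕ → RatFunc ℚ) (h0 : β 0 = 1)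
    (hrec : ∀ m : ℕ, 1 ≤ m →
      RatFunc.X * (∑ i ∈ Finset.range (m + 1), (m.choose i : RatFunc ℚ) * RatFunc.X ^ i * β i)
        - β m = if m = 1 then 1 else 0)
    (n : ℕ) (hn : 2 ≤ n) :
    (β n : LaurentSeries ℚ) = ((carlitzSeries n : PowerSeries ℚ) : LaurentSeries ℚ) := by
  have hX : ((RatFunc.X : RatFunc ℚ) : LaurentSeries ℚ)
      = HahnSeries.ofPowerSeries ℤ ℚ PowerSeries.X := by
    rw [RatFunc.coe_X, HahnSeries.ofPowerSeries_X]
  have hβ := (IsBernoulliCarlitz.mk h0 hrec).map (algebraMap (RatFunc ℚ) (LaurentSeries ℚ))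
  rw [hX] at hβ
  have hseries := isBernoulliCarlitz_bernoulliCarlitzSeries.map (HahnSeries.ofPowerSeries ℤ ℚ)
  have hXpow :
      ∀ m : ℕ, 1 ≤ m → HahnSeries.ofPowerSeries ℤ ℚ PowerSeries.X ^ (m + 1) ≠ 1 := by
    intro m _ h
    rw [← map_pow, ← map_one (HahnSeries.ofPowerSeries ℤ ℚ)] at h
    simpa using congrArg PowerSeries.constantCoeff (HahnSeries.ofPowerSeries_injective h)
  rw [← bernoulliCarlitzSeries_eq_carlitzSeries hn]
  exact congrFun (hβ.unique hXpow hseries) n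
end

section
/- For n ≥ 2, β_n = ζ_q(1−n)(q − (n+1)q²), where ζ_q(s) = Σ_{m≥1} F_m/[m]^s; explicitly, β_n = Σ_{m≥1} [m]^{n−1} (q^m − (n+1) q^{2m}) as formal power series in q. -/
/-!
The recurrence determines `β` uniquely, since `β_m` enters its own equation with the nonzero
coefficient `q^{m+1} - 1`; a binomial-transform computation shows that Carlitz's closed form
`(1 - q)⁻ᵐ ∑ₖ (-1)ᵏ C(m, k) (k + 1) / [k + 1]` satisfies it. On the zeta side,
`[m]^{n-1} (1 - q)^{n-1} = (1 - q^m)^{n-1}`; expanding binomially and summing over `m` turns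
`(1 - q)^{n-1} ζ_q(1 - n)(q^a)` into a signed combination of Lambert terms `q^b / (1 - q^b)`,
and a Pascal-type identity matches the combination for `q - (n + 1) q²` with Carlitz's sum.
The infinite sums over `m` are compared with their partial sums modulo `X^{K+1}`.
-/

open PowerSeries

/-- The quantum integer `[m] = 1 + q + ⋯ + q^{m-1}` as a power series over `ℚ`. -/
noncomputable def qIntPS (m : ℕ) : PowerSeries ℚ := ∑ i ∈ Finset.range m, (X : PowerSeries ℚ) ^ i

/-- The formal Frobenius `F_m : f(q) ↦ f(q^m)` on power series. -/
noncomputable def frobPS (m : ℕ) (f : PowerSeries ℚ) : PowerSeries ℚ :=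
  PowerSeries.mk fun k => if m ∣ k then coeff (k / m) f else 0

/-- The operator `ζ_q(1−n) = Σ_{m≥1} [m]^{n-1} F_m` (the Riemann `ζ_q` operator at the
nonpositive integer `s = 1 − n`), acting on series without constant term; the `k`-th
coefficient involves only the terms with `m ≤ k`. -/
noncomputable def zetaQNeg (n : ℕ) (f : PowerSeries ℚ) : PowerSeries ℚ :=
  PowerSeries.mk fun k =>
    coeff k (∑ m ∈ Finset.Icc 1 k, qIntPS m ^ (n - 1) * frobPS m f)

open Finset
open scoped LaurentSeries

section Binomial

variable {R : Type*} [CommRing R]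

theorem sum_choose_mul_pow_mul_one_sub_pow_mul_sum_choose (x : R) (u : ℕ → R) (m : ℕ) :
    ∑ i ∈ range (m + 1), m.choose i * x ^ i * (1 - x) ^ (m - i) *
        ∑ k ∈ range (i + 1), i.choose k * u k =
      ∑ k ∈ range (m + 1), m.choose k * x ^ k * u k := by
  simp only [mul_sum, range_eq_Ico]
  rw [← sum_Ico_Ico_comm 0 (m + 1)]
  refine sum_congr rfl fun k hk => ?_
  have hkm : k ≤ m := by rw [mem_Ico] at hk; omega
  rw [sum_Ico_eq_sum_range, show m + 1 - k = m - k + 1 by omega]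
  -- `C(m, k + j) C(k + j, k) = C(m, k) C(m - k, j)`, and the `j`-sum is `(x + (1 - x)) ^ (m - k)`
  have hbinom :
      ∑ j ∈ range (m - k + 1), x ^ j * (1 - x) ^ (m - k - j) * ((m - k).choose j : R) = 1 := by
    rw [← add_pow, add_sub_cancel, one_pow]
  calc ∑ j ∈ range (m - k + 1), m.choose (k + j) * x ^ (k + j) * (1 - x) ^ (m - (k + j)) *
          ((k + j).choose k * u k)
      = ∑ j ∈ range (m - k + 1), m.choose k * x ^ k * u k *
          (x ^ j * (1 - x) ^ (m - k - j) * ((m - k).choose j : R)) := by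
        refine sum_congr rfl fun j _ => ?_
        have hc : (m.choose (k + j) * (k + j).choose k : R) = m.choose k * (m - k).choose j := by
          have := Nat.choose_mul (n := m) (Nat.le_add_right k j)
          rw [Nat.add_sub_cancel_left] at this
          rw [← Nat.cast_mul, ← Nat.cast_mul, this]
        rw [pow_add, Nat.sub_add_eq]
        linear_combination (x ^ k * x ^ j * (1 - x) ^ (m - k - j) * u k) * hc
    _ = m.choose k * x ^ k * u k := by rw [← mul_sum, hbinom, mul_one]

theorem choose_succ_add_mul_choose (d j : ℕ) :
    d.choose (j + 1) + (d + 2) * d.choose j = (j + 2) * (d + 1).choose (j + 1) := by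
  have h := Nat.add_one_mul_choose_eq d j
  rw [Nat.choose_succ_succ'] at h ⊢
  nlinarith

theorem sum_neg_one_pow_mul_choose_sub (G : ℕ → R) (d : ℕ) :
    ∑ j ∈ range (d + 1), (-1) ^ j * d.choose j * G (j + 1) -
        (d + 2) * ∑ j ∈ range (d + 1), (-1) ^ j * d.choose j * G (j + 2) =
      ∑ k ∈ range (d + 2), (d + 1).choose k * ((-1) ^ k * (k + 1) * G (k + 1)) := by
  have hfirst : ∑ j ∈ range (d + 1), (-1) ^ j * d.choose j * G (j + 1) =
      ∑ j ∈ range (d + 2), (-1) ^ j * d.choose j * G (j + 1) := by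
    simp [sum_range_succ _ (d + 1)]
  rw [hfirst, sum_range_succ', sum_range_succ' _ (d + 1), mul_sum, ← sub_add_eq_add_sub,
    ← sum_sub_distrib]
  congr 1
  · refine sum_congr rfl fun j _ => ?_
    have hc := congrArg (Nat.cast : ℕ → R) (choose_succ_add_mul_choose d j)
    push_cast at hc ⊢
    linear_combination (-1) ^ (j + 1) * G (j + 2) * hc
  · simp

theorem sum_choose_mul_neg_one_pow_mul_succ {m : ℕ} (hm : 2 ≤ m) :
    ∑ k ∈ range (m + 1), m.choose k * ((-1) ^ k * (k + 1) : R) = 0 := by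
  obtain ⟨d, rfl⟩ : ∃ d, m = d + 1 + 1 := ⟨m - 2, by omega⟩
  have h := sum_neg_one_pow_mul_choose_sub (fun _ => (1 : R)) (d + 1)
  have halt : ∑ j ∈ range (d + 1 + 1), ((-1) ^ j * (d + 1).choose j : R) = 0 := by
    have := congrArg (Int.cast : ℤ → R)
      (Int.alternating_sum_range_choose_of_ne (Nat.succ_ne_zero d))
    push_cast at this
    exact this
  simp only [mul_one] at h
  rw [← h, halt, mul_zero, sub_zero]

end Binomial

section Carlitz

variable {K : Type*} [Field K]

def carlitzSum (x : K) (m : ℕ) : K :=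
  ∑ k ∈ range (m + 1), m.choose k * ((-1) ^ k * (k + 1) / (1 - x ^ (k + 1)))

/-- As `(1 - x) / (1 - x ^ (k + 1)) = 1 / [k + 1]_x`, this is Carlitz's closed form
`β_m = (1 - x)⁻ᵐ ∑ₖ (-1)ᵏ C(m, k) (k + 1) / [k + 1]_x`. -/
def carlitzFormula (x : K) (m : ℕ) : K := (1 - x) * carlitzSum x m / (1 - x) ^ m

theorem carlitzSum_recurrence {x : K} (hx : ∀ k, x ^ (k + 1) ≠ 1) {m : ℕ} (hm : 1 ≤ m) :
    x * ∑ i ∈ range (m + 1), m.choose i * x ^ i * (1 - x) ^ (m - i) * carlitzSum x i -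
      carlitzSum x m = if m = 1 then 1 else 0 := by
  unfold carlitzSum
  rw [sum_choose_mul_pow_mul_one_sub_pow_mul_sum_choose x
    (fun k => (-1) ^ k * (k + 1) / (1 - x ^ (k + 1))) m, mul_sum, ← sum_sub_distrib]
  have hterm : ∀ k, x * (m.choose k * x ^ k * ((-1) ^ k * (k + 1) / (1 - x ^ (k + 1)))) -
      m.choose k * ((-1) ^ k * (k + 1) / (1 - x ^ (k + 1))) =
        -(m.choose k * ((-1) ^ k * (k + 1))) := by
    intro k
    have : 1 - x ^ (k + 1) ≠ 0 := sub_ne_zero.mpr (hx k).symm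
    field_simp
    ring
  rw [sum_congr rfl fun k _ => hterm k, sum_neg_distrib]
  split_ifs with h
  · subst h; norm_num [sum_range_succ]
  · rw [sum_choose_mul_neg_one_pow_mul_succ (by omega), neg_zero]

theorem carlitzFormula_zero {x : K} (hx : x ≠ 1) : carlitzFormula x 0 = 1 := by
  have : 1 - x ≠ 0 := sub_ne_zero.mpr hx.symm
  simp [carlitzFormula, carlitzSum]
  field_simp

theorem carlitzFormula_recurrence {x : K} (hx : ∀ k, x ^ (k + 1) ≠ 1) {m : ℕ} (hm : 1 ≤ m) :
    x * ∑ i ∈ range (m + 1), m.choose i * x ^ i * carlitzFormula x i - carlitzFormula x m =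
      if m = 1 then 1 else 0 := by
  have hx1 : 1 - x ≠ 0 := sub_ne_zero.mpr (by simpa using (hx 0).symm)
  have hscale : x * ∑ i ∈ range (m + 1), m.choose i * x ^ i * carlitzFormula x i -
      carlitzFormula x m = (1 - x) / (1 - x) ^ m * (x * ∑ i ∈ range (m + 1),
        m.choose i * x ^ i * (1 - x) ^ (m - i) * carlitzSum x i - carlitzSum x m) := by
    rw [mul_sub, mul_sum, mul_sum, mul_sum]
    congr 1
    · refine sum_congr rfl fun i hi => ?_
      have him : (1 - x) ^ m = (1 - x) ^ (m - i) * (1 - x) ^ i := by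
        rw [← pow_add, Nat.sub_add_cancel (Nat.lt_succ_iff.mp (mem_range.mp hi))]
      rw [carlitzFormula, him]
      field_simp
    · rw [carlitzFormula]; ring
  rw [hscale, carlitzSum_recurrence hx hm]
  split_ifs with h
  · subst h; field_simp
  · simp

theorem eq_of_bernoulliCarlitz_recurrence {x : K} (hx : ∀ k, x ^ (k + 1) ≠ 1) {b b' : ℕ → K}
    (h0 : b 0 = b' 0)
    (h : ∀ m, 1 ≤ m → x * ∑ i ∈ range (m + 1), m.choose i * x ^ i * b i - b m =
      x * ∑ i ∈ range (m + 1), m.choose i * x ^ i * b' i - b' m) : b = b' := by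
  funext m
  induction m using Nat.strong_induction_on with
  | _ m ih =>
    rcases Nat.eq_zero_or_pos m with rfl | hm
    · exact h0
    have hlow :
        ∑ i ∈ range m, m.choose i * x ^ i * b i = ∑ i ∈ range m, m.choose i * x ^ i * b' i :=
      sum_congr rfl fun i hi => by rw [ih i (mem_range.mp hi)]
    have hm' := h m hm
    simp only [sum_range_succ, hlow, Nat.choose_self, Nat.cast_one, one_mul] at hm'
    have : (x ^ (m + 1) - 1) * b m = (x ^ (m + 1) - 1) * b' m := by linear_combination hm'
    exact mul_left_cancel₀ (sub_ne_zero.mpr (hx m)) this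

theorem map_carlitzFormula {L : Type*} [Field L] (f : K →+* L) (x : K) (m : ℕ) :
    f (carlitzFormula x m) = carlitzFormula (f x) m := by
  simp [carlitzFormula, carlitzSum]

theorem carlitzSum_eq_sum_div {x : K} (hx : ∀ k, x ^ (k + 1) ≠ 1) {m : ℕ} (hm : 2 ≤ m) :
    carlitzSum x m =
      ∑ k ∈ range (m + 1),
        m.choose k * ((-1) ^ k * (k + 1) * (x ^ (k + 1) / (1 - x ^ (k + 1)))) := by
  have hterm : ∀ k, (m.choose k : K) * ((-1) ^ k * (k + 1) / (1 - x ^ (k + 1))) =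
      m.choose k * ((-1) ^ k * (k + 1) * (x ^ (k + 1) / (1 - x ^ (k + 1)))) +
        m.choose k * ((-1) ^ k * (k + 1)) := by
    intro k
    have : 1 - x ^ (k + 1) ≠ 0 := sub_ne_zero.mpr (hx k).symm
    field_simp
    ring
  rw [carlitzSum, sum_congr rfl fun k _ => hterm k, sum_add_distrib,
    sum_choose_mul_neg_one_pow_mul_succ hm, add_zero]

end Carlitz

theorem PowerSeries.eq_of_forall_X_pow_dvd_sub {R : Type*} [Ring R] {f g : R⟦X⟧}
    (h : ∀ K, X ^ (K + 1) ∣ f - g) : f = g := by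
  ext K
  have := X_pow_dvd_iff.mp (h K) K (Nat.lt_succ_self K)
  rwa [map_sub, sub_eq_zero] at this

theorem PowerSeries.X_pow_dvd_X_pow_mul_inv_sub_sum {k : Type*} [Field k] {a : ℕ} (ha : 1 ≤ a)
    (K : ℕ) : X ^ (K + 1) ∣ X ^ a * (1 - X ^ a : k⟦X⟧)⁻¹ - ∑ m ∈ Icc 1 K, (X ^ a) ^ m := by
  set r : k⟦X⟧ := X ^ a
  have hinv : (1 - r) * (1 - r)⁻¹ = 1 :=
    PowerSeries.mul_inv_cancel _ (by simp [r, zero_pow (Nat.one_le_iff_ne_zero.mp ha)])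
  have hgeom : (∑ m ∈ Icc 1 K, r ^ m) * (1 - r) = r ^ 1 - r ^ (K + 1) := by
    rw [← Finset.Ico_add_one_right_eq_Icc]
    exact geom_sum_Ico_mul_neg r (by omega)
  have htail : r * (1 - r)⁻¹ - ∑ m ∈ Icc 1 K, r ^ m = X ^ (a * (K + 1)) * (1 - r)⁻¹ := by
    rw [pow_mul]
    linear_combination (-(1 - r)⁻¹) * hgeom + (∑ m ∈ Icc 1 K, r ^ m) * hinv
  rw [htail]
  exact (pow_dvd_pow X (Nat.le_mul_of_pos_left (K + 1) ha)).mul_right _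

theorem frobPS_sub_C_mul (m : ℕ) (f g : PowerSeries ℚ) (c : ℚ) :
    frobPS m (f - C c * g) = frobPS m f - C c * frobPS m g := by
  ext k
  simp only [frobPS, coeff_mk, map_sub, coeff_C_mul]
  split_ifs <;> simp

theorem zetaQNeg_sub_C_mul (n : ℕ) (f g : PowerSeries ℚ) (c : ℚ) :
    zetaQNeg n (f - C c * g) = zetaQNeg n f - C c * zetaQNeg n g := by
  ext k
  simp only [zetaQNeg, coeff_mk, frobPS_sub_C_mul, mul_sub, mul_left_comm _ (C c), ← mul_sum,
    sum_sub_distrib, map_sub, coeff_C_mul]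

theorem frobPS_X_pow {m : ℕ} (hm : 1 ≤ m) (a : ℕ) : frobPS m (X ^ a) = (X ^ a) ^ m := by
  ext k
  rw [frobPS, coeff_mk, ← pow_mul, coeff_X_pow, coeff_X_pow]
  by_cases h : m ∣ k
  · obtain ⟨t, rfl⟩ := h
    have hm0 : 0 < m := hm
    simp [Nat.mul_div_cancel_left t hm0, mul_comm a m, hm0.ne']
  · rw [if_neg h, if_neg]
    rintro rfl
    exact h (dvd_mul_left m a)

theorem X_pow_dvd_frobPS {f : PowerSeries ℚ} (hf : constantCoeff f = 0) (m : ℕ) :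
    X ^ m ∣ frobPS m f := by
  rw [X_pow_dvd_iff]
  intro i hi
  rw [frobPS, coeff_mk]
  split_ifs with h
  · obtain ⟨_ | t, rfl⟩ := h
    · simpa using hf
    · exact absurd hi (not_lt.mpr (Nat.le_mul_of_pos_right m t.succ_pos))
  · rfl

theorem X_pow_dvd_zetaQNeg_sub {f : PowerSeries ℚ} (hf : constantCoeff f = 0) (n K : ℕ) :
    X ^ (K + 1) ∣ zetaQNeg n f - ∑ m ∈ Icc 1 K, qIntPS m ^ (n - 1) * frobPS m f := by
  rw [X_pow_dvd_iff]
  intro i hi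
  rw [map_sub, zetaQNeg, coeff_mk, sub_eq_zero, map_sum, map_sum]
  refine sum_subset (Icc_subset_Icc_right (by omega)) fun m hm hnot => ?_
  have him : i < m := by simp only [mem_Icc, not_and, not_le] at hm hnot; exact hnot hm.1
  exact X_pow_dvd_iff.mp ((X_pow_dvd_frobPS hf m).mul_left _) i him

theorem qIntPS_mul_one_sub_X (m : ℕ) : qIntPS m * (1 - X) = 1 - X ^ m :=
  geom_sum_mul_neg X m

theorem zetaQNeg_X_pow_mul_one_sub_X_pow (d : ℕ) {a : ℕ} (ha : 1 ≤ a) :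
    zetaQNeg (d + 1) (X ^ a) * (1 - X) ^ d =
      ∑ j ∈ range (d + 1),
        ((-1) ^ j * d.choose j : ℚ⟦X⟧) * (X ^ (j + a) * (1 - X ^ (j + a))⁻¹) := by
  refine eq_of_forall_X_pow_dvd_sub fun K => ?_
  have hpartial : (∑ m ∈ Icc 1 K, qIntPS m ^ d * frobPS m (X ^ a)) * (1 - X) ^ d =
      ∑ j ∈ range (d + 1), ((-1) ^ j * d.choose j : ℚ⟦X⟧) * ∑ m ∈ Icc 1 K, (X ^ (j + a)) ^ m := by
    simp_rw [sum_mul, mul_sum]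
    rw [sum_comm]
    refine sum_congr rfl fun m hm => ?_
    rw [frobPS_X_pow (mem_Icc.mp hm).1, mul_right_comm, ← mul_pow, qIntPS_mul_one_sub_X,
      ← neg_add_eq_sub, add_pow, sum_mul]
    refine sum_congr rfl fun j _ => ?_
    ring
  have hzeta := X_pow_dvd_zetaQNeg_sub (f := X ^ a) (by simp; omega) (d + 1) K
  rw [Nat.add_sub_cancel] at hzeta
  have hsplit : zetaQNeg (d + 1) (X ^ a) * (1 - X) ^ d -
      ∑ j ∈ range (d + 1),
        ((-1) ^ j * d.choose j : ℚ⟦X⟧) * (X ^ (j + a) * (1 - X ^ (j + a))⁻¹) =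
      (zetaQNeg (d + 1) (X ^ a) - ∑ m ∈ Icc 1 K, qIntPS m ^ d * frobPS m (X ^ a)) * (1 - X) ^ d -
        ∑ j ∈ range (d + 1), ((-1) ^ j * d.choose j : ℚ⟦X⟧) *
          (X ^ (j + a) * (1 - X ^ (j + a))⁻¹ - ∑ m ∈ Icc 1 K, (X ^ (j + a)) ^ m) := by
    rw [sub_mul, hpartial]
    simp only [mul_sub, sum_sub_distrib]
    ring
  rw [hsplit]
  exact dvd_sub (hzeta.mul_right _)
    (dvd_sum fun j _ => (X_pow_dvd_X_pow_mul_inv_sub_sum (by omega) K).mul_left _)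

theorem zetaQNeg_X_sub_C_mul_X_sq_mul_one_sub_X_pow (d : ℕ) (c : ℚ) :
    zetaQNeg (d + 1) (X - C c * X ^ 2) * (1 - X) ^ d =
      ∑ j ∈ range (d + 1), ((-1) ^ j * d.choose j : ℚ⟦X⟧) * (X ^ (j + 1) * (1 - X ^ (j + 1))⁻¹) -
        C c * ∑ j ∈ range (d + 1),
          ((-1) ^ j * d.choose j : ℚ⟦X⟧) * (X ^ (j + 2) * (1 - X ^ (j + 2))⁻¹) := by
  rw [← zetaQNeg_X_pow_mul_one_sub_X_pow d le_rfl,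
    ← zetaQNeg_X_pow_mul_one_sub_X_pow d one_le_two, ← mul_assoc, ← sub_mul,
    ← zetaQNeg_sub_C_mul, pow_one]

theorem PowerSeries.coe_inv {k : Type*} [Field k] {f : k⟦X⟧} (hf : constantCoeff f ≠ 0) :
    ((f⁻¹ : k⟦X⟧) : k⸨X⸩) = (f : k⸨X⸩)⁻¹ := by
  refine eq_inv_of_mul_eq_one_left ?_
  rw [← coe_mul, PowerSeries.inv_mul_cancel f hf, coe_one]

theorem PowerSeries.coe_X_pow_ne_one {k : Type*} [Field k] {a : ℕ} (ha : a ≠ 0) :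
    ((X : k⟦X⟧) : k⸨X⸩) ^ a ≠ 1 := by
  rw [← coe_pow, ← coe_one, Ne, HahnSeries.ofPowerSeries_injective.eq_iff]
  intro h
  simpa [zero_pow ha] using congrArg constantCoeff h

theorem coe_zetaQNeg_eq_carlitzFormula {n : ℕ} (hn : 2 ≤ n) :
    ((zetaQNeg n (X - ((n : ℚ⟦X⟧) + 1) * X ^ 2) : ℚ⟦X⟧) : ℚ⸨X⸩) =
      carlitzFormula ((X : ℚ⟦X⟧) : ℚ⸨X⸩) n := by
  obtain ⟨d, rfl⟩ : ∃ d, n = d + 2 := ⟨n - 2, by omega⟩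
  set y : ℚ⸨X⸩ := ((X : ℚ⟦X⟧) : ℚ⸨X⸩) with hy_def
  have hy : ∀ k, y ^ (k + 1) ≠ 1 := fun k => coe_X_pow_ne_one k.succ_ne_zero
  have hinv : ∀ b, (((1 - X ^ (b + 1) : ℚ⟦X⟧)⁻¹ : ℚ⟦X⟧) : ℚ⸨X⸩) = (1 - y ^ (b + 1))⁻¹ := by
    intro b
    rw [PowerSeries.coe_inv (by simp)]
    simp [y]
  have hc : C (((d + 2 : ℕ) : ℚ) + 1) = ((d + 2 : ℕ) : ℚ⟦X⟧) + 1 := by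
    rw [map_add, map_natCast, map_one]
  have hseries := congrArg (HahnSeries.ofPowerSeries ℤ ℚ)
    (zetaQNeg_X_sub_C_mul_X_sq_mul_one_sub_X_pow (d + 1) ((d + 2 : ℕ) + 1))
  rw [hc] at hseries
  simp only [map_sub, map_sum, map_mul, map_pow, map_neg, map_one, map_add, map_natCast, hinv,
    ← hy_def] at hseries
  have hsum : ((zetaQNeg (d + 2) (X - (((d + 2 : ℕ) : ℚ⟦X⟧) + 1) * X ^ 2) : ℚ⟦X⟧) : ℚ⸨X⸩) *
      (1 - y) ^ (d + 1) = carlitzSum y (d + 2) := by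
    rw [carlitzSum_eq_sum_div hy (by omega),
      ← sum_neg_one_pow_mul_choose_sub (fun b => y ^ b / (1 - y ^ b)) (d + 1), hseries]
    simp only [div_eq_mul_inv]
    push_cast
    ring
  have hy1 : (1 : ℚ⸨X⸩) - y ≠ 0 := sub_ne_zero.mpr (by simpa using (hy 0).symm)
  rw [carlitzFormula, eq_div_iff (pow_ne_zero _ hy1), ← hsum, pow_succ]
  ring

/-- for `n ≥ 2`, `β_n = ζ_q(1−n)(q − (n+1)q²)`, i.e. explicitly
`β_n = Σ_{m≥1} [m]^{n-1}(q^m − (n+1)q^{2m})`, as an identity between the expansion of the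
rational function `β_n` at `q = 0` and the displayed formal power series. -/
theorem bernoulliCarlitz_eq_zetaQ (β : ℕ → RatFunc ℚ) (h0 : β 0 = 1)
    (hrec : ∀ m : ℕ, 1 ≤ m →
      RatFunc.X * (∑ i ∈ Finset.range (m + 1), (m.choose i : RatFunc ℚ) * RatFunc.X ^ i * β i)
        - β m = if m = 1 then 1 else 0)
    (n : ℕ) (hn : 2 ≤ n) :
    (β n : LaurentSeries ℚ) =
      ((zetaQNeg n (X - ((n : PowerSeries ℚ) + 1) * X ^ 2) : PowerSeries ℚ) :
        LaurentSeries ℚ) := by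
  have hXcoe : ((RatFunc.X : RatFunc ℚ) : ℚ⸨X⸩) = ((X : ℚ⟦X⟧) : ℚ⸨X⸩) :=
    RatFunc.coe_X.trans PowerSeries.coe_X.symm
  have hX : ∀ k, (RatFunc.X : RatFunc ℚ) ^ (k + 1) ≠ 1 := fun k h =>
    coe_X_pow_ne_one k.succ_ne_zero (by rw [← hXcoe, ← map_pow, h, map_one])
  have hβ : β = carlitzFormula RatFunc.X :=
    eq_of_bernoulliCarlitz_recurrence hX (by rw [h0, carlitzFormula_zero (by simpa using hX 0)])
      fun m hm => by rw [hrec m hm, carlitzFormula_recurrence hX hm]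
  rw [hβ, coe_zetaQNeg_eq_carlitzFormula hn, ← hXcoe]
  exact map_carlitzFormula _ _ _
end

section
/- For all n ≥ 0 and positive rational x, q^x β_n(x) = Σ_{k≥0} q^{k+x} [k+x]^{n−1} − (n+1) Σ_{k≥0} q^{2k+2x} [k+x]^{n−1}, as convergent (Puiseux) series in q. -/
/-!
Put `v_k = q^(k+x)` and `c_k = [k+x]`, so that `v_{k+1} = q v_k` and `c_{k+1} = c_k + v_k`.
For the form `B(u, c) = Σ_i C(n,i) u^i β_i c^(n-i)`, expanding `(c + u)^(n-i)` binomially and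
applying the Carlitz recurrence gives `B(u, c) - q B(q u, c + u) = (1 - q) c^n - n u c^(n-1)`.
Hence `f_k = v_k B(v_k, c_k)` telescopes: since `(1 - q) c_k = 1 - v_k`, the difference
`f_k - f_{k+1}` is the `k`-th term of the right-hand side, and `f_k → 0`, so the series sums to
`f_0 = q^x β_n(x)`.
-/

open Finset Filter Topology

/-- The quantum number `[y] = (q^y − 1)/(q − 1)` for a real exponent `y` (via `rpow`). -/
noncomputable def qNumR (q y : ℝ) : ℝ := (q ^ y - 1) / (q - 1)

theorem sum_choose_mul_pow_mul_add_pow {R : Type*} [CommSemiring R] (a : ℕ → R) (u c : R)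
    (n : ℕ) :
    ∑ i ∈ range (n + 1), (n.choose i : R) * u ^ i * a i * (c + u) ^ (n - i) =
      ∑ m ∈ range (n + 1), (n.choose m : R) * u ^ m *
        (∑ i ∈ range (m + 1), (m.choose i : R) * a i) * c ^ (n - m) := by
  calc _ = ∑ i ∈ range (n + 1), ∑ m ∈ Ico i (n + 1), (n.choose i : R) * u ^ i * a i *
        (u ^ (m - i) * c ^ (n - m) * ((n - i).choose (m - i) : R)) := by
        refine sum_congr rfl fun i hi => ?_
        have hin : n + 1 - i = n - i + 1 := by grind
        rw [add_comm c u, add_pow, mul_sum, sum_Ico_eq_sum_range, hin]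
        refine sum_congr rfl fun j _ => ?_
        rw [Nat.add_sub_cancel_left, Nat.sub_sub]
    _ = ∑ m ∈ range (n + 1), ∑ i ∈ range (m + 1), (n.choose i : R) * u ^ i * a i *
        (u ^ (m - i) * c ^ (n - m) * ((n - i).choose (m - i) : R)) :=
        sum_comm' fun i m => by simp only [mem_range, mem_Ico]; omega
    _ = _ := by
        refine sum_congr rfl fun m _ => ?_
        rw [mul_sum, sum_mul]
        refine sum_congr rfl fun i hi => ?_
        have him : i ≤ m := Nat.lt_succ_iff.mp (mem_range.mp hi)
        have hchoose : (n.choose m : R) * m.choose i = n.choose i * (n - i).choose (m - i) := by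
          rw [← Nat.cast_mul, Nat.choose_mul him, Nat.cast_mul]
        calc _ = (n.choose i : R) * (n - i).choose (m - i) * (u ^ i * u ^ (m - i)) *
              c ^ (n - m) * a i := by ring
          _ = _ := by rw [← hchoose, ← pow_add, Nat.add_sub_cancel' him]; ring

theorem hasSum_sub_succ_of_tendsto {G : Type*} [AddCommGroup G] [TopologicalSpace G]
    [IsTopologicalAddGroup G] [T2Space G] {f : ℕ → G} {l : G}
    (hs : Summable fun n => f n - f (n + 1)) (hf : Tendsto f atTop (𝓝 l)) :
    HasSum (fun n => f n - f (n + 1)) (f 0 - l) := by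
  rw [hs.hasSum_iff_tendsto_nat]
  simp_rw [sum_range_sub']
  exact tendsto_const_nhds.sub hf

theorem summable_mul_of_tendsto {f w : ℕ → ℝ} {L : ℝ} (hf : Summable f)
    (hw : Tendsto w atTop (𝓝 L)) : Summable fun k => f k * w k :=
  summable_of_isBigO_nat hf
    (by simpa using (Asymptotics.isBigO_refl f atTop).mul (hw.isBigO_one ℝ))

noncomputable def qBernoulliForm {R : Type*} [CommSemiring R] (β : ℕ → R) (n : ℕ) (u c : R) :
    R :=
  ∑ i ∈ range (n + 1), (n.choose i : R) * u ^ i * β i * c ^ (n - i)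

theorem continuous_qBernoulliForm {R : Type*} [CommSemiring R] [TopologicalSpace R]
    [IsTopologicalSemiring R] (β : ℕ → R) (n : ℕ) :
    Continuous fun p : R × R => qBernoulliForm β n p.1 p.2 := by
  unfold qBernoulliForm
  fun_prop

theorem qBernoulliForm_sub_mul_shift {R : Type*} [CommRing R] {q : R} {β : ℕ → R}
    (h0 : β 0 = 1)
    (hrec : ∀ m : ℕ, 1 ≤ m →
      q * (∑ i ∈ range (m + 1), (m.choose i : R) * q ^ i * β i) - β m = if m = 1 then 1 else 0)
    (n : ℕ) (u c : R) :
    qBernoulliForm β n u c - q * qBernoulliForm β n (q * u) (c + u) =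
      (1 - q) * c ^ n - n * u * c ^ (n - 1) := by
  have hcoef : ∀ m, q * ∑ i ∈ range (m + 1), (m.choose i : R) * (q ^ i * β i) =
      β m + (if m = 0 then q - 1 else 0) + (if m = 1 then 1 else 0) := by
    rintro (_ | m)
    · simp [h0]
    · have := hrec (m + 1) (Nat.le_add_left 1 m)
      simp only [← mul_assoc] at *
      grind
  have hshift : q * qBernoulliForm β n (q * u) (c + u) =
      qBernoulliForm β n u c + (q - 1) * c ^ n + n * u * c ^ (n - 1) := by
    calc _ = q * ∑ i ∈ range (n + 1),
          (n.choose i : R) * u ^ i * (q ^ i * β i) * (c + u) ^ (n - i) := by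
          simp only [qBernoulliForm, mul_pow, mul_assoc, mul_left_comm (q ^ _)]
      _ = ∑ m ∈ range (n + 1), (n.choose m : R) * u ^ m *
          (q * ∑ i ∈ range (m + 1), (m.choose i : R) * (q ^ i * β i)) * c ^ (n - m) := by
          rw [sum_choose_mul_pow_mul_add_pow, mul_sum]
          refine sum_congr rfl fun m _ => ?_
          ring
      _ = _ := by
          simp only [hcoef, mul_add, add_mul, sum_add_distrib, mul_ite, ite_mul, mul_zero,
            zero_mul, sum_ite_eq', mem_range]
          rcases n with _ | n <;> simp [qBernoulliForm]
  rw [hshift]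
  ring

theorem qNumR_add {q : ℝ} (hq : 0 < q) (x y : ℝ) :
    qNumR q (x + y) = qNumR q x + q ^ x * qNumR q y := by
  simp only [qNumR, Real.rpow_add hq]
  ring

theorem qNumR_one {q : ℝ} (hq : q ≠ 1) : qNumR q 1 = 1 := by
  simp [qNumR, sub_ne_zero.mpr hq]

theorem one_sub_mul_qNumR {q : ℝ} (hq : q ≠ 1) (y : ℝ) : (1 - q) * qNumR q y = 1 - q ^ y := by
  rw [qNumR, ← neg_sub q 1, neg_mul, mul_div_cancel₀ _ (sub_ne_zero.mpr hq)]
  ring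

theorem qNumR_pos {q y : ℝ} (hq0 : 0 < q) (hq1 : q < 1) (hy : 0 < y) : 0 < qNumR q y :=
  div_pos_of_neg_of_neg (by linarith [Real.rpow_lt_one hq0.le hq1 hy]) (by linarith)

theorem qBernoulliForm_rpow_qNumR {q : ℝ} (hq : 0 < q) (β : ℕ → ℝ) (n : ℕ) (x : ℝ) :
    qBernoulliForm β n (q ^ x) (qNumR q x) =
      ∑ i ∈ range (n + 1), (n.choose i : ℝ) * q ^ ((i : ℝ) * x) * β i * qNumR q x ^ (n - i) := by
  simp only [qBernoulliForm, mul_comm _ x, Real.rpow_mul hq.le, Real.rpow_natCast]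

theorem rpow_natCast_succ_add {q : ℝ} (hq : 0 < q) (k : ℕ) (x : ℝ) :
    q ^ (((k + 1 : ℕ) : ℝ) + x) = q * q ^ ((k : ℝ) + x) := by
  rw [Nat.cast_succ, add_right_comm, Real.rpow_add hq, Real.rpow_one, mul_comm]

theorem qNumR_natCast_succ_add {q : ℝ} (hq0 : 0 < q) (hq1 : q ≠ 1) (k : ℕ) (x : ℝ) :
    qNumR q (((k + 1 : ℕ) : ℝ) + x) = qNumR q ((k : ℝ) + x) + q ^ ((k : ℝ) + x) := by
  rw [Nat.cast_succ, add_right_comm, qNumR_add hq0, qNumR_one hq1, mul_one]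

theorem summable_rpow_natCast_add {q : ℝ} (hq0 : 0 < q) (hq1 : q < 1) (x : ℝ) :
    Summable fun k : ℕ => q ^ ((k : ℝ) + x) := by
  simp_rw [add_comm _ x, Real.rpow_add_natCast hq0.ne']
  exact (summable_geometric_of_lt_one hq0.le hq1).mul_left _

theorem tendsto_qNumR_natCast_add {q : ℝ} (hq0 : 0 < q) (hq1 : q < 1) (x : ℝ) :
    Tendsto (fun k : ℕ => qNumR q ((k : ℝ) + x)) atTop (𝓝 (1 - q)⁻¹) := by
  have h := (((summable_rpow_natCast_add hq0 hq1 x).tendsto_atTop_zero).sub_const 1).div_const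
    (q - 1)
  rwa [zero_sub, neg_div, ← div_neg, neg_sub, one_div] at h

theorem mul_sub_mul_pow_pred_eq_zpow {K : Type*} [Field K] {q v c : K} (hc : c ≠ 0)
    (h : (1 - q) * c = 1 - v) (n : ℕ) :
    v * ((1 - q) * c ^ n - n * v * c ^ (n - 1)) =
      v * c ^ ((n : ℤ) - 1) - (n + 1) * (v * v * c ^ ((n : ℤ) - 1)) := by
  have hpow : c ^ n = c ^ ((n : ℤ) - 1) * c := by
    rw [← zpow_natCast, ← zpow_add_one₀ hc, sub_add_cancel]
  have hpred : (n : K) * c ^ (n - 1) = n * c ^ ((n : ℤ) - 1) := by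
    rcases n with _ | n <;> simp
  linear_combination (v * c ^ ((n : ℤ) - 1)) * h + v * (1 - q) * hpow - v * v * hpred

/-- for all `n ≥ 0` and positive rational `x`, the `q`-Bernoulli polynomial
`β_n(x) = Σ_{i=0}^n C(n,i) q^{ix} β_i [x]^{n−i}` (built from the Bernoulli–Carlitz
fractions `β_i`) satisfies
`q^x β_n(x) = Σ_{k≥0} q^{k+x} [k+x]^{n−1} − (n+1) Σ_{k≥0} q^{2k+2x} [k+x]^{n−1}`,
the series converging for `0 < q < 1`. -/
theorem qBernoullipoly_series (q : ℝ) (hq : q ∈ Set.Ioo (0 : ℝ) 1)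
    (β : ℕ → ℝ) (h0 : β 0 = 1)
    (hrec : ∀ m : ℕ, 1 ≤ m →
      q * (∑ i ∈ Finset.range (m + 1), (m.choose i : ℝ) * q ^ i * β i) - β m
        = if m = 1 then 1 else 0)
    (n : ℕ) (x : ℚ) (hx : 0 < x) :
    q ^ (x : ℝ) * (∑ i ∈ Finset.range (n + 1),
        (n.choose i : ℝ) * q ^ ((i : ℝ) * x) * β i * qNumR q x ^ (n - i)) =
      (∑' k : ℕ, q ^ ((k : ℝ) + x) * qNumR q ((k : ℝ) + x) ^ ((n : ℤ) - 1))
        - ((n : ℝ) + 1) *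
          ∑' k : ℕ, q ^ (2 * (k : ℝ) + 2 * x) * qNumR q ((k : ℝ) + x) ^ ((n : ℤ) - 1) := by
  obtain ⟨hq0, hq1⟩ := hq
  set X : ℝ := (x : ℝ)
  have hX : 0 < X := Rat.cast_pos.mpr hx
  set v : ℕ → ℝ := fun k => q ^ ((k : ℝ) + X)
  set c : ℕ → ℝ := fun k => qNumR q ((k : ℝ) + X)
  set f : ℕ → ℝ := fun k => v k * qBernoulliForm β n (v k) (c k)
  have hstep (k : ℕ) : f k - f (k + 1) =
      v k * c k ^ ((n : ℤ) - 1) - (n + 1) * (v k * v k * c k ^ ((n : ℤ) - 1)) := by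
    rw [← mul_sub_mul_pow_pred_eq_zpow (qNumR_pos hq0 hq1 (by positivity)).ne'
      (one_sub_mul_qNumR hq1.ne _), ← qBernoulliForm_sub_mul_shift h0 hrec]
    simp only [f, v, c, rpow_natCast_succ_add hq0, qNumR_natCast_succ_add hq0 hq1.ne]
    ring
  have hv : Summable v := summable_rpow_natCast_add hq0 hq1 X
  have hc : Tendsto c atTop (𝓝 (1 - q)⁻¹) := tendsto_qNumR_natCast_add hq0 hq1 X
  have hcz := hc.zpow₀ ((n : ℤ) - 1) (Or.inl (inv_ne_zero (by linarith)))
  have ha : Summable fun k => v k * c k ^ ((n : ℤ) - 1) := summable_mul_of_tendsto hv hcz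
  have hb : Summable fun k => v k * v k * c k ^ ((n : ℤ) - 1) := by
    simpa only [mul_assoc] using summable_mul_of_tendsto hv (hv.tendsto_atTop_zero.mul hcz)
  have hf : Tendsto f atTop (𝓝 0) := by
    simpa using hv.tendsto_atTop_zero.mul
      (((continuous_qBernoulliForm β n).tendsto _).comp (hv.tendsto_atTop_zero.prodMk_nhds hc))
  have htel := hasSum_sub_succ_of_tendsto (by simpa only [hstep] using ha.sub (hb.mul_left _)) hf
  simp only [hstep, sub_zero] at htel
  have hv2 (k : ℕ) : q ^ (2 * (k : ℝ) + 2 * X) = v k * v k := by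
    rw [← Real.rpow_add hq0]; ring_nf
  have hf0 : f 0 = q ^ X * qBernoulliForm β n (q ^ X) (qNumR q X) := by simp [f, v, c]
  rw [← qBernoulliForm_rpow_qNumR hq0, ← hf0]
  simp_rw [hv2]
  exact htel.unique (ha.hasSum.sub (hb.hasSum.mul_left _))
end

section
/- Let χ be a nontrivial Dirichlet character mod N and define the generalized Bernoulli–Carlitz fractions β_{χ,n} = Σ_{j=0}^{N−1} χ(j) [N]^{n−1} · (q^{j/N} β_n(j/N))|_{q→q^N}. Then for all n ≥ 0, β_{χ,n} = L_q(χ, 1−n)(q − (n+1)q²) = Σ_{m≥1} χ(m) [m]^{n−1} (q^m − (n+1) q^{2m}). -/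
/-- The `q`-Bernoulli polynomial `β_n(x) = Σ_{i=0}^n C(n,i) q^{ix} β_i [x]^{n−i}` at a real
`q`, built from the values `β_i` of the Bernoulli–Carlitz fractions at `q`. -/
noncomputable def qBernoulliPoly (q : ℝ) (β : ℕ → ℝ) (n : ℕ) (x : ℝ) : ℝ :=
  ∑ i ∈ Finset.range (n + 1), (n.choose i : ℝ) * q ^ ((i : ℝ) * x) * β i * qNumR q x ^ (n - i)

/-!
Write `Q = q ^ N`. Carlitz's explicit formula expresses the Bernoulli–Carlitz fractions through
the linear functional `L : X ^ l ↦ (l + 1) / [l + 1]_Q` as `β_m = L((X - 1) ^ m) / (Q - 1) ^ m`: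
this sequence satisfies the Carlitz recurrence, which determines it. By the binomial theorem
`Q ^ x β_n(x) = s L((s X - 1) ^ n) / (Q - 1) ^ n` with `s = Q ^ x`.

On the other side, the terms of the `L`-series with `m = N k + j` are, up to the factor
`(q - 1) ^ (1 - n)`, the values `-u (X (X - 1) ^ n)'(u)` at `u = q ^ j Q ^ k`. Summing the
geometric series in `k` monomial by monomial produces the same functional `L`, so each residue
class `j` matches the `j`-th term of `β_{χ,n}`; the class `j = 0` vanishes on both sides since
`χ 0 = 0`.
-/

open Finset Polynomial

section Field

variable {K : Type*} [Field K]

theorem C_mul_X_sub_one_pow (s : K) (n : ℕ) :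
    (C s * X - 1) ^ n =
      ∑ i ∈ range (n + 1), C ((n.choose i : K) * s ^ i * (s - 1) ^ (n - i)) * (X - 1) ^ i := by
  rw [show C s * X - 1 = C s * (X - 1) + C (s - 1) by simp; ring, add_pow]
  refine sum_congr rfl fun i _ => ?_
  simp only [mul_pow, ← C_pow, map_mul, map_natCast]
  ring

theorem eval_derivative_X_mul_X_sub_one_pow (u : K) (n : ℕ) :
    (derivative (X * (X - 1) ^ n)).eval u = (u - 1) ^ n + n * u * (u - 1) ^ (n - 1) := by
  simp only [derivative_mul, derivative_X, one_mul, derivative_pow, map_natCast, derivative_sub,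
    derivative_one, sub_zero, mul_one, eval_add, eval_pow, eval_sub, eval_X, eval_one, eval_mul,
    eval_natCast]
  ring

theorem zpow_sub_one_mul_eq_neg_mul_eval_derivative {u : K} (hu : u ≠ 1) (c : K) (n : ℕ) :
    ((u - 1) / c) ^ ((n : ℤ) - 1) * (u - (n + 1) * u ^ 2) =
      -(u * (derivative (X * (X - 1) ^ n)).eval u) / c ^ ((n : ℤ) - 1) := by
  have hu1 : u - 1 ≠ 0 := sub_ne_zero.2 hu
  rw [div_zpow, eval_derivative_X_mul_X_sub_one_pow]
  rcases n with _ | n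
  · simp only [CharP.cast_eq_zero, zero_sub, zpow_neg, zpow_one, pow_zero]
    field_simp
    ring
  · simp only [Nat.cast_add, Nat.cast_one, add_sub_cancel_right, add_tsub_cancel_right,
      zpow_natCast]
    field_simp
    ring

noncomputable def carlitzFunctional (Q : K) : K[X] →ₗ[K] K :=
  Polynomial.lsum fun l => (((l : K) + 1) * (Q - 1) / (Q ^ (l + 1) - 1)) • LinearMap.id

theorem carlitzFunctional_monomial (Q a : K) (l : ℕ) :
    carlitzFunctional Q (monomial l a) = a * (((l : K) + 1) * (Q - 1) / (Q ^ (l + 1) - 1)) := by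
  rw [carlitzFunctional, lsum_apply, sum_monomial_index _ _ (by simp)]
  simp [mul_comm]

theorem carlitzFunctional_C_mul (Q a : K) (p : K[X]) :
    carlitzFunctional Q (C a * p) = a * carlitzFunctional Q p := by
  rw [← smul_eq_C_mul, map_smul, smul_eq_mul]

theorem carlitzFunctional_one (Q : K) (hQ : Q ≠ 1) : carlitzFunctional Q 1 = 1 := by
  rw [← monomial_zero_one, carlitzFunctional_monomial]
  simp [div_self (sub_ne_zero.2 hQ)]

theorem carlitzFunctional_C_mul_X_sub_one_pow (Q s : K) (n : ℕ) :
    carlitzFunctional Q ((C s * X - 1) ^ n) =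
      ∑ i ∈ range (n + 1), (n.choose i : K) * s ^ i * (s - 1) ^ (n - i) *
        carlitzFunctional Q ((X - 1) ^ i) := by
  simp only [C_mul_X_sub_one_pow, map_sum, carlitzFunctional_C_mul]

theorem mul_carlitzFunctional_comp_C_mul_X_sub {Q : K} (hQ : ∀ l : ℕ, Q ^ (l + 1) ≠ 1)
    (p : K[X]) :
    Q * carlitzFunctional Q (p.comp (C Q * X)) - carlitzFunctional Q p =
      (Q - 1) * (derivative (X * p)).eval 1 := by
  induction p using Polynomial.induction_on' with
  | add p r hp hr =>
    simp only [add_comp, map_add, mul_add, eval_add]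
    linear_combination hp + hr
  | monomial l a =>
    have hQl := sub_ne_zero.2 (hQ l)
    rw [monomial_comp, mul_pow, ← C_pow, ← mul_assoc, ← C_mul, C_mul_X_pow_eq_monomial,
      carlitzFunctional_monomial, carlitzFunctional_monomial, X_mul_monomial, derivative_monomial]
    simp only [eval_monomial, one_pow, mul_one, add_tsub_cancel_right, Nat.cast_add, Nat.cast_one]
    field_simp
    ring

def IsBernoulliCarlitz_s16 (Q : K) (β : ℕ → K) : Prop :=
  β 0 = 1 ∧ ∀ m : ℕ, 1 ≤ m →
    Q * (∑ i ∈ range (m + 1), (m.choose i : K) * Q ^ i * β i) - β m = if m = 1 then 1 else 0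

theorem IsBernoulliCarlitz_s16.unique {Q : K} (hQ : ∀ l : ℕ, Q ^ (l + 1) ≠ 1) {β β' : ℕ → K}
    (h : IsBernoulliCarlitz_s16 Q β) (h' : IsBernoulliCarlitz_s16 Q β') : β = β' := by
  funext m
  induction m using Nat.strong_induction_on with
  | _ m ih =>
    rcases m with _ | m
    · rw [h.1, h'.1]
    have hrec := h.2 (m + 1) m.succ_pos
    have hrec' := h'.2 (m + 1) m.succ_pos
    rw [sum_range_succ, sum_congr rfl fun i hi => by rw [ih i (by simpa using hi)]] at hrec
    rw [sum_range_succ] at hrec'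
    have hcoeff : Q ^ (m + 2) - 1 ≠ 0 := sub_ne_zero.2 (hQ (m + 1))
    refine sub_eq_zero.1 ((mul_eq_zero.1 ?_).resolve_left hcoeff)
    rw [Nat.choose_self, Nat.cast_one] at hrec hrec'
    linear_combination hrec - hrec'

noncomputable def carlitzBernoulli (Q : K) (m : ℕ) : K :=
  carlitzFunctional Q ((X - 1) ^ m) / (Q - 1) ^ m

theorem isBernoulliCarlitz_carlitzBernoulli {Q : K} (hQ : ∀ l : ℕ, Q ^ (l + 1) ≠ 1) :
    IsBernoulliCarlitz_s16 Q (carlitzBernoulli Q) := by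
  have hQ1 : Q ≠ 1 := by simpa using hQ 0
  refine ⟨by simp [carlitzBernoulli, carlitzFunctional_one Q hQ1], fun m hm => ?_⟩
  have hsum : (∑ i ∈ range (m + 1), (m.choose i : K) * Q ^ i * carlitzBernoulli Q i) =
      carlitzFunctional Q ((C Q * X - 1) ^ m) / (Q - 1) ^ m := by
    rw [carlitzFunctional_C_mul_X_sub_one_pow, sum_div]
    refine sum_congr rfl fun i hi => ?_
    rw [carlitzBernoulli, ← pow_sub_mul_pow (Q - 1) (Nat.lt_succ_iff.1 (mem_range.1 hi))]
    field_simp [sub_ne_zero.2 hQ1]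
  have hcomp := mul_carlitzFunctional_comp_C_mul_X_sub hQ ((X - 1) ^ m)
  rw [eval_derivative_X_mul_X_sub_one_pow, sub_self, zero_pow (by omega),
    show ((X - 1) ^ m : K[X]).comp (C Q * X) = (C Q * X - 1) ^ m by simp] at hcomp
  rw [hsum, carlitzBernoulli, mul_div_assoc', div_sub_div_same, hcomp,
    div_eq_iff (pow_ne_zero _ (sub_ne_zero.2 hQ1))]
  obtain rfl | hm1 := eq_or_ne m 1
  · simp
  · rw [if_neg hm1, zero_pow (by omega)]
    simp

end Field

section Normed

variable {𝕜 : Type*} [NormedField 𝕜]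

theorem norm_pow_succ_lt_one {Q : 𝕜} (hQ : ‖Q‖ < 1) (l : ℕ) : ‖Q ^ (l + 1)‖ < 1 :=
  (norm_pow Q (l + 1)).trans_lt (pow_lt_one₀ (norm_nonneg _) hQ l.succ_ne_zero)

theorem pow_succ_ne_one_of_norm_lt_one {Q : 𝕜} (hQ : ‖Q‖ < 1) (l : ℕ) : Q ^ (l + 1) ≠ 1 :=
  ne_of_apply_ne norm <| by simpa using (norm_pow_succ_lt_one hQ l).ne

theorem hasSum_mul_eval_derivative_X_mul {Q : 𝕜} (hQ : ‖Q‖ < 1) (s : 𝕜) (p : 𝕜[X]) :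
    HasSum (fun k : ℕ => s * Q ^ k * (derivative (X * p)).eval (s * Q ^ k))
      (-(s * carlitzFunctional Q (p.comp (C s * X))) / (Q - 1)) := by
  induction p using Polynomial.induction_on' with
  | add p r hp hr =>
    convert hp.add hr using 1
    · funext k
      simp only [mul_add, derivative_add, eval_add]
    · simp only [add_comp, map_add]
      ring
  | monomial l a =>
    have hQ1 : Q - 1 ≠ 0 := sub_ne_zero.2 (by simpa using pow_succ_ne_one_of_norm_lt_one hQ 0)
    have hQl : Q ^ (l + 1) - 1 ≠ 0 := sub_ne_zero.2 (pow_succ_ne_one_of_norm_lt_one hQ l)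
    have hQl' : 1 - Q ^ (l + 1) ≠ 0 := sub_ne_zero.2 (pow_succ_ne_one_of_norm_lt_one hQ l).symm
    have hsum : -(s * carlitzFunctional Q ((monomial l a).comp (C s * X))) / (Q - 1) =
        a * (l + 1) * s ^ (l + 1) * (1 - Q ^ (l + 1))⁻¹ := by
      rw [monomial_comp, mul_pow, ← C_pow, ← mul_assoc, ← C_mul, C_mul_X_pow_eq_monomial,
        carlitzFunctional_monomial]
      field_simp
      ring
    rw [hsum]
    refine ((hasSum_geometric_of_norm_lt_one (norm_pow_succ_lt_one hQ l)).mul_left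
      (a * (l + 1) * s ^ (l + 1))).congr_fun fun k => ?_
    rw [X_mul_monomial, derivative_monomial, eval_monomial]
    push_cast
    ring

end Normed

theorem hasSum_of_forall_hasSum_mul_add {M : Type*} [AddCommMonoid M] [TopologicalSpace M]
    [ContinuousAdd M] {f : ℕ → M} {N : ℕ} (hN : 0 < N) {a : ℕ → M}
    (h : ∀ j < N, HasSum (fun k => f (N * k + j)) (a j)) : HasSum f (∑ j ∈ range N, a j) := by
  have hclass : ∀ j ∈ range N, HasSum ({m | m % N = j}.indicator f) (a j) := by
    intro j hj
    have hj : j < N := mem_range.1 hj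
    refine (Function.Injective.hasSum_iff (g := fun k => N * k + j)
      (fun k l hkl => by simpa [hN.ne'] using hkl) fun m hm => ?_).1 ?_
    · refine Set.indicator_of_notMem (s := {m | m % N = j})
        (fun (hmj : m % N = j) => hm ⟨m / N, ?_⟩) f
      rw [← hmj]
      exact Nat.div_add_mod m N
    · refine (h j hj).congr_fun fun k => Set.indicator_of_mem ?_ f
      simp [Nat.mod_eq_of_lt hj]
  refine (hasSum_sum hclass).congr_fun fun m => ?_
  simp [Set.indicator_apply, Nat.mod_lt m hN]

theorem qNumR_natCast (q : ℝ) (m : ℕ) : qNumR q m = (q ^ m - 1) / (q - 1) := by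
  rw [qNumR, Real.rpow_natCast]

theorem qBernoulliPoly_carlitzBernoulli {Q : ℝ} (hQ0 : 0 ≤ Q) (hQ1 : Q ≠ 1) (n : ℕ) (x : ℝ) :
    qBernoulliPoly Q (carlitzBernoulli Q) n x =
      carlitzFunctional Q ((C (Q ^ x) * X - 1) ^ n) / (Q - 1) ^ n := by
  rw [qBernoulliPoly, carlitzFunctional_C_mul_X_sub_one_pow, sum_div]
  refine sum_congr rfl fun i hi => ?_
  rw [mul_comm (i : ℝ), Real.rpow_mul_natCast hQ0, carlitzBernoulli, qNumR, div_pow,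
    ← pow_sub_mul_pow (Q - 1) (Nat.lt_succ_iff.1 (mem_range.1 hi))]
  field_simp [sub_ne_zero.2 hQ1]

theorem hasSum_qNumR_zpow_residueClass {q : ℝ} (hq : q ∈ Set.Ioo 0 1) {N j : ℕ} (hN : N ≠ 0)
    (hj : j ≠ 0) (n : ℕ) :
    HasSum (fun k => qNumR q ↑(N * k + j) ^ ((n : ℤ) - 1) *
        (q ^ (N * k + j) - ((n : ℝ) + 1) * q ^ (2 * (N * k + j))))
      (qNumR q N ^ ((n : ℤ) - 1) * ((q ^ N) ^ ((j : ℝ) / N) *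
        qBernoulliPoly (q ^ N) (carlitzBernoulli (q ^ N)) n ((j : ℝ) / N))) := by
  obtain ⟨hq0, hq1⟩ := hq
  have hQ0 : 0 < q ^ N := pow_pos hq0 N
  have hQ1 : q ^ N < 1 := pow_lt_one₀ hq0.le hq1 hN
  have hQ : ‖q ^ N‖ < 1 := by rwa [Real.norm_of_nonneg hQ0.le]
  have hrpow : (q ^ N) ^ ((j : ℝ) / N) = q ^ j := by
    rw [← Real.rpow_natCast_mul hq0.le, mul_div_cancel₀ _ (Nat.cast_ne_zero.2 hN),
      Real.rpow_natCast]
  have hsum := (hasSum_mul_eval_derivative_X_mul hQ (q ^ j) ((X - 1) ^ n)).neg.div_const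
    ((q - 1) ^ ((n : ℤ) - 1))
  rw [show ((X - 1) ^ n : ℝ[X]).comp (C (q ^ j) * X) = (C (q ^ j) * X - 1) ^ n by simp] at hsum
  have hval : qNumR q N ^ ((n : ℤ) - 1) * ((q ^ N) ^ ((j : ℝ) / N) *
      qBernoulliPoly (q ^ N) (carlitzBernoulli (q ^ N)) n ((j : ℝ) / N)) =
      -(-(q ^ j * carlitzFunctional (q ^ N) ((C (q ^ j) * X - 1) ^ n)) / (q ^ N - 1)) /
        (q - 1) ^ ((n : ℤ) - 1) := by
    rw [qNumR_natCast, hrpow, qBernoulliPoly_carlitzBernoulli hQ0.le hQ1.ne, hrpow, div_zpow,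
      zpow_sub_one₀ (sub_ne_zero.2 hQ1.ne), zpow_natCast]
    field_simp [sub_ne_zero.2 hQ1.ne]
  rw [hval]
  refine hsum.congr_fun fun k => ?_
  have hu : q ^ (N * k + j) ≠ 1 := (pow_lt_one₀ hq0.le hq1 (by omega)).ne
  rw [qNumR_natCast, pow_mul', zpow_sub_one_mul_eq_neg_mul_eval_derivative hu,
    show q ^ (N * k + j) = q ^ j * (q ^ N) ^ k by ring]

/-- for a nontrivial Dirichlet character `χ` mod `N`, the generalized
Bernoulli–Carlitz fractions
`β_{χ,n} = Σ_{j=0}^{N-1} χ(j) [N]^{n-1} · (q^{j/N} β_n(j/N))|_{q→q^N}` satisfy, for all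
`n ≥ 0`, `β_{χ,n} = L_q(χ,1−n)(q − (n+1)q²) = Σ_{m≥1} χ(m) [m]^{n-1}(q^m − (n+1)q^{2m})`.
Here `βN` is the sequence of values at `q^N` of the Bernoulli–Carlitz fractions,
characterized by the Carlitz recurrence at `q^N`. -/
theorem genBernoulliCarlitz_eq_Lq (N : ℕ) [NeZero N] (χ : DirichletCharacter ℂ N)
    (hχ : χ ≠ 1) (q : ℝ) (hq : q ∈ Set.Ioo (0 : ℝ) 1)
    (βN : ℕ → ℝ) (h0 : βN 0 = 1)
    (hrec : ∀ m : ℕ, 1 ≤ m →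
      q ^ N * (∑ i ∈ Finset.range (m + 1), (m.choose i : ℝ) * (q ^ N) ^ i * βN i) - βN m
        = if m = 1 then 1 else 0)
    (n : ℕ) :
    (∑ j ∈ Finset.range N, χ (j : ZMod N) *
        ((qNumR q N ^ ((n : ℤ) - 1) : ℝ) : ℂ) *
        (((q ^ N : ℝ) ^ ((j : ℝ) / N) * qBernoulliPoly (q ^ N) βN n ((j : ℝ) / N) : ℝ) : ℂ)) =
      ∑' m : ℕ, χ (m : ZMod N) * ((qNumR q m ^ ((n : ℤ) - 1) : ℝ) : ℂ) *
        (((q ^ m - ((n : ℝ) + 1) * q ^ (2 * m) : ℝ)) : ℂ) := by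
  have hN : 1 < N := by
    by_contra! h
    exact hχ (χ.level_one' (by have := NeZero.ne N; omega))
  have : Fact (1 < N) := ⟨hN⟩
  have hQ : ‖q ^ N‖ < 1 := by
    rw [Real.norm_of_nonneg (pow_nonneg hq.1.le N)]
    exact pow_lt_one₀ hq.1.le hq.2 (by omega)
  have hQl := pow_succ_ne_one_of_norm_lt_one hQ
  obtain rfl : βN = carlitzBernoulli (q ^ N) :=
    IsBernoulliCarlitz_s16.unique hQl ⟨h0, hrec⟩ (isBernoulliCarlitz_carlitzBernoulli hQl)
  refine (hasSum_of_forall_hasSum_mul_add (by omega) fun j hj => ?_).tsum_eq.symm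
  obtain rfl | hj0 := eq_or_ne j 0
  · simp [χ.map_nonunit not_isUnit_zero]
  · have hχj : ∀ k, χ ((N * k + j : ℕ) : ZMod N) = χ j := by simp
    simp_rw [hχj, mul_assoc, ← Complex.ofReal_mul]
    exact (Complex.hasSum_ofReal.2
      (hasSum_qNumR_zpow_residueClass hq (by omega) hj0 n)).mul_left _
end
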